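/- arXiv:2301.08944 — 3 statements merged into one kernel-verified Lean document; each statement's English description precedes it below -/
import Mathlib

section
/- Let p ≥ 1 be an integer and let λ > 1. Then for every real polynomial g of degree at most p, the squared L² norm of g over the set I_λ \ Ī = (-λ,-1] ∪ [1,λ) is bounded by (1/2)·[(λ + √(λ²-1))^{2p+1} - 1] times the squared L² norm of g over I = (-1,1); that is, ∫_{1≤|x|<λ} g(x)² dx ≤ (1/2)[(λ+√(λ²-1))^{2p+1} - 1] ∫_{-1}^{1} g(x)² dx. -/
/-!
Expand `g` in the Legendre polynomials `Pₖ` (Rodrigues' formula), which are orthogonal on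
`(-1, 1)` with `‖Pₖ‖² = 2 / (2k + 1)`; Cauchy–Schwarz on the coefficients gives the pointwise
bound `g(x)² ≤ (∑_{k ≤ p} (2k + 1)/2 · Pₖ(x)²) · ∫_{-1}^{1} g²`. For `x ≥ 1`, Leibniz' rule
writes `Pₖ(x)` as a sum of squares `∑ⱼ (C(k,j) sʲ tᵏ⁻ʲ)²` with `s² = (x - 1)/2`,
`t² = (x + 1)/2`, whence `0 ≤ Pₖ(x) ≤ (s + t)²ᵏ = ν(x)ᵏ` with `ν(x) = x + √(x² - 1)`. Since
`ν² - 1 = 2ν√(x² - 1)`, the majorant `∑_{k ≤ p} (2k + 1)/2 · ν²ᵏ` is dominated by the derivative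
of `ν²ᵖ⁺¹/4`, so its integral over `[1, λ]` is at most `(ν(λ)²ᵖ⁺¹ - 1)/4`. The piece
`(-λ, -1]` is the same estimate for `g(-x)`.
-/

open MeasureTheory Polynomial Finset

noncomputable section

namespace Polynomial

open scoped Nat

lemma intervalIntegrable_eval_mul_eval (f g : ℝ[X]) (a b : ℝ) :
    IntervalIntegrable (fun x => f.eval x * g.eval x) volume a b :=
  (f.continuous.mul g.continuous).intervalIntegrable a b

def l2Inner : ℝ[X] →ₗ[ℝ] ℝ[X] →ₗ[ℝ] ℝ :=
  LinearMap.mk₂ ℝ (fun f g => ∫ x in (-1)..1, f.eval x * g.eval x)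
    (fun f₁ f₂ g => by
      simp only [eval_add, add_mul]
      exact intervalIntegral.integral_add (intervalIntegrable_eval_mul_eval _ _ _ _)
        (intervalIntegrable_eval_mul_eval _ _ _ _))
    (fun c f g => by
      simp only [eval_smul, smul_eq_mul, mul_assoc]
      exact intervalIntegral.integral_const_mul c _)
    (fun f g₁ g₂ => by
      simp only [eval_add, mul_add]
      exact intervalIntegral.integral_add (intervalIntegrable_eval_mul_eval _ _ _ _)
        (intervalIntegrable_eval_mul_eval _ _ _ _))
    (fun c f g => by
      simp only [eval_smul, smul_eq_mul, mul_left_comm _ c]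
      exact intervalIntegral.integral_const_mul c _)

lemma l2Inner_apply (f g : ℝ[X]) : l2Inner f g = ∫ x in (-1)..1, f.eval x * g.eval x := rfl

lemma l2Inner_comm (f g : ℝ[X]) : l2Inner f g = l2Inner g f := by
  simp only [l2Inner_apply, mul_comm]

lemma l2Inner_self (f : ℝ[X]) : l2Inner f f = ∫ x in (-1)..1, f.eval x ^ 2 := by
  simp only [l2Inner_apply, sq]

lemma l2Inner_self_nonneg (f : ℝ[X]) : 0 ≤ l2Inner f f := by
  rw [l2Inner_self]
  exact intervalIntegral.integral_nonneg (by norm_num) fun x _ => sq_nonneg _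

lemma l2Inner_comp_neg_X (f g : ℝ[X]) : l2Inner (f.comp (-X)) (g.comp (-X)) = l2Inner f g := by
  simp only [l2Inner_apply, eval_comp, eval_neg, eval_X]
  rw [intervalIntegral.integral_comp_neg (fun x => f.eval x * g.eval x), neg_neg]

lemma l2Inner_derivative (f g : ℝ[X]) :
    l2Inner f (derivative g) =
      f.eval 1 * g.eval 1 - f.eval (-1) * g.eval (-1) - l2Inner (derivative f) g :=
  intervalIntegral.integral_mul_deriv_eq_deriv_mul (fun x _ => f.hasDerivAt x)
    (fun x _ => g.hasDerivAt x) (f.derivative.continuous.intervalIntegrable _ _)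
    (g.derivative.continuous.intervalIntegrable _ _)

lemma l2Inner_iterate_derivative {k : ℕ} {v : ℝ[X]}
    (hv : ∀ m < k, (derivative^[m] v).eval 1 = 0 ∧ (derivative^[m] v).eval (-1) = 0)
    (f : ℝ[X]) : l2Inner f (derivative^[k] v) = (-1) ^ k * l2Inner (derivative^[k] f) v := by
  induction k generalizing f with
  | zero => simp
  | succ k ih =>
    obtain ⟨h₁, h₂⟩ := hv k k.lt_succ_self
    rw [Function.iterate_succ_apply', l2Inner_derivative, h₁, h₂,
      ih (fun m hm => hv m (hm.trans k.lt_succ_self)), Function.iterate_succ_apply]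
    ring

lemma eval_iterate_derivative_eq_zero_of_pow_dvd {R : Type*} [CommRing R] {p : R[X]} {t : R}
    {n m : ℕ} (hp : (X - C t) ^ n ∣ p) (hm : m < n) : (derivative^[m] p).eval t = 0 :=
  dvd_iff_isRoot.mp <| (dvd_pow_self _ (Nat.sub_ne_zero_of_lt hm)).trans
    (pow_sub_dvd_iterate_derivative_of_pow_dvd m hp)

lemma exists_eq_sum_smul_of_degree_lt {K : Type*} [Field K] {P : ℕ → K[X]}
    (hdeg : ∀ k, (P k).natDegree ≤ k) (hcoeff : ∀ k, (P k).coeff k ≠ 0) {n : ℕ} {g : K[X]}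
    (hg : g.degree < n) : ∃ c : ℕ → K, g = ∑ k ∈ range n, c k • P k := by
  induction n generalizing g with
  | zero => exact ⟨0, by simpa using hg⟩
  | succ n ih =>
    set d := g.coeff n / (P n).coeff n
    have hdeg' : (g - d • P n).degree < n := by
      rw [degree_lt_iff_coeff_zero] at hg ⊢
      intro m hm
      rcases hm.eq_or_lt with rfl | hm
      · simp [d, hcoeff]
      · rw [coeff_sub, coeff_smul, hg m (by exact_mod_cast hm),
          coeff_eq_zero_of_natDegree_lt ((hdeg n).trans_lt hm), smul_zero, sub_zero]
    obtain ⟨c, hc⟩ := ih hdeg'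
    refine ⟨Function.update c n d, ?_⟩
    rw [sum_range_succ, Function.update_self,
      sum_congr rfl fun k hk => by rw [Function.update_of_ne (mem_range.mp hk).ne], ← hc,
      sub_add_cancel]

def legendre (k : ℕ) : ℝ[X] := (2 ^ k * k ! : ℝ)⁻¹ • derivative^[k] ((X ^ 2 - 1) ^ k)

lemma X_sq_sub_one_pow (k : ℕ) :
    ((X : ℝ[X]) ^ 2 - 1) ^ k = (X - C 1) ^ k * (X - C (-1)) ^ k := by
  rw [← mul_pow]; congr 1; simp only [map_one, map_neg, sub_neg_eq_add]; ring

lemma monic_X_sq_sub_one_pow (k : ℕ) : (((X : ℝ[X]) ^ 2 - 1) ^ k).Monic := by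
  simpa using (monic_X_pow_sub_C (1 : ℝ) two_ne_zero).pow k

lemma natDegree_X_sq_sub_one_pow (k : ℕ) : (((X : ℝ[X]) ^ 2 - 1) ^ k).natDegree = 2 * k := by
  rw [natDegree_pow, ← C_1, natDegree_X_pow_sub_C, mul_comm]

lemma iterate_derivative_X_sq_sub_one_pow (k : ℕ) :
    derivative^[k] (((X : ℝ[X]) ^ 2 - 1) ^ k) =
      ∑ j ∈ range (k + 1), (k ! * k.choose j ^ 2) • ((X - C 1) ^ j * (X - C (-1)) ^ (k - j)) := by
  rw [X_sq_sub_one_pow, iterate_derivative_mul]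
  refine sum_congr rfl fun j hj => ?_
  have hjk : j ≤ k := Nat.lt_succ_iff.mp (mem_range.mp hj)
  rw [iterate_derivative_X_sub_pow, iterate_derivative_X_sub_pow, Nat.sub_sub_self hjk,
    smul_mul_assoc, mul_smul_comm, smul_smul, smul_smul]
  congr 1
  rw [Nat.descFactorial_eq_factorial_mul_choose k (k - j),
    Nat.descFactorial_eq_factorial_mul_choose k j, Nat.choose_symm hjk]
  calc k.choose j * ((k - j)! * k.choose j) * (j ! * k.choose j)
      = (k.choose j * j ! * (k - j)!) * k.choose j ^ 2 := by ring
    _ = k ! * k.choose j ^ 2 := by rw [Nat.choose_mul_factorial_mul_factorial hjk]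

lemma eval_legendre (k : ℕ) (x : ℝ) :
    (legendre k).eval x =
      ∑ j ∈ range (k + 1), (k.choose j : ℝ) ^ 2 * ((x - 1) / 2) ^ j * ((x + 1) / 2) ^ (k - j) := by
  rw [legendre, eval_smul, iterate_derivative_X_sq_sub_one_pow, eval_finsetSum, smul_eq_mul,
    mul_sum]
  refine sum_congr rfl fun j hj => ?_
  have hjk : j ≤ k := Nat.lt_succ_iff.mp (mem_range.mp hj)
  have h2 : (2 : ℝ) ^ k = 2 ^ j * 2 ^ (k - j) := by rw [← pow_add, Nat.add_sub_cancel' hjk]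
  simp only [nsmul_eq_mul, eval_mul, eval_pow, eval_sub, eval_X, eval_C, eval_natCast,
    sub_neg_eq_add, div_pow, h2]
  push_cast
  field_simp

lemma sq_eval_legendre_le {x : ℝ} (hx : 1 ≤ x) (k : ℕ) :
    (legendre k).eval x ^ 2 ≤ (x + √(x ^ 2 - 1)) ^ (2 * k) := by
  set s := √((x - 1) / 2)
  set t := √((x + 1) / 2)
  have hs : s ^ 2 = (x - 1) / 2 := Real.sq_sqrt (by linarith)
  have ht : t ^ 2 = (x + 1) / 2 := Real.sq_sqrt (by linarith)
  have hst : (s + t) ^ 2 = x + √(x ^ 2 - 1) := by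
    have : s * t = √(x ^ 2 - 1) / 2 := by
      rw [← Real.sqrt_mul (by linarith), show (x - 1) / 2 * ((x + 1) / 2) = (x ^ 2 - 1) / 2 ^ 2 by
        ring, Real.sqrt_div' _ (by norm_num), Real.sqrt_sq (by norm_num)]
    linear_combination hs + ht + 2 * this
  set a : ℕ → ℝ := fun j => k.choose j * s ^ j * t ^ (k - j)
  have hL : (legendre k).eval x = ∑ j ∈ range (k + 1), a j ^ 2 := by
    rw [eval_legendre]
    refine sum_congr rfl fun j _ => ?_
    simp only [a, mul_pow, ← hs, ← ht, ← pow_mul, mul_comm _ 2]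
  have hsum : ∑ j ∈ range (k + 1), a j = (s + t) ^ k := by
    rw [add_pow]; exact sum_congr rfl fun j _ => by ring
  have h0 : 0 ≤ (legendre k).eval x := hL ▸ sum_nonneg fun j _ => sq_nonneg _
  have h1 : (legendre k).eval x ≤ (x + √(x ^ 2 - 1)) ^ k := by
    rw [hL, ← hst, pow_right_comm, ← hsum]
    exact sum_sq_le_sq_sum_of_nonneg fun j _ => by positivity
  rw [pow_mul']
  exact pow_le_pow_left₀ h0 h1 2

lemma natDegree_legendre_le (k : ℕ) : (legendre k).natDegree ≤ k :=
  (natDegree_smul_le _ _).trans <| (natDegree_iterate_derivative _ k).trans <| by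
    rw [natDegree_X_sq_sub_one_pow]; omega

lemma coeff_legendre_self (k : ℕ) : (legendre k).coeff k = k.centralBinom / 2 ^ k := by
  rw [legendre, coeff_smul, coeff_iterate_derivative, ← two_mul,
    ← natDegree_X_sq_sub_one_pow k, (monic_X_sq_sub_one_pow k).coeff_natDegree,
    natDegree_X_sq_sub_one_pow, Nat.descFactorial_eq_factorial_mul_choose,
    ← Nat.centralBinom_eq_two_mul_choose]
  simp only [nsmul_eq_mul, Nat.cast_mul, mul_one, smul_eq_mul]
  field_simp

lemma l2Inner_legendre (f : ℝ[X]) (k : ℕ) :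
    l2Inner f (legendre k) =
      (2 ^ k * k ! : ℝ)⁻¹ * (-1) ^ k * l2Inner (derivative^[k] f) ((X ^ 2 - 1) ^ k) := by
  have hv : ∀ m < k, (derivative^[m] (((X : ℝ[X]) ^ 2 - 1) ^ k)).eval 1 = 0 ∧
      (derivative^[m] (((X : ℝ[X]) ^ 2 - 1) ^ k)).eval (-1) = 0 := fun m hm =>
    ⟨eval_iterate_derivative_eq_zero_of_pow_dvd (X_sq_sub_one_pow k ▸ dvd_mul_right _ _) hm,
      eval_iterate_derivative_eq_zero_of_pow_dvd (X_sq_sub_one_pow k ▸ dvd_mul_left _ _) hm⟩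
  rw [legendre, map_smul, l2Inner_iterate_derivative hv, smul_eq_mul, mul_assoc]

lemma l2Inner_legendre_of_lt {j k : ℕ} (h : j < k) : l2Inner (legendre j) (legendre k) = 0 := by
  rw [l2Inner_legendre, iterate_derivative_eq_zero ((natDegree_legendre_le j).trans_lt h),
    map_zero, LinearMap.zero_apply, mul_zero]

lemma l2Inner_C_X_sq_sub_one_pow (a : ℝ) (k : ℕ) :
    l2Inner (C a) ((X ^ 2 - 1) ^ k) = a * (-1) ^ k * ∫ x in (-1)..1, (1 - x ^ 2) ^ k := by
  rw [l2Inner_apply, mul_assoc, ← intervalIntegral.integral_const_mul,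
    ← intervalIntegral.integral_const_mul]
  congr 1 with x
  simp only [eval_C, eval_pow, eval_sub, eval_X, eval_one]
  rw [← neg_sub, neg_pow]

lemma integral_one_sub_sq_pow (k : ℕ) :
    ∫ x in (-1)..1, (1 - x ^ 2) ^ k = 2 * ∏ i ∈ range k, (2 * (i : ℝ) + 2) / (2 * i + 3) := by
  rw [← integral_sin_pow_odd]
  have := intervalIntegral.integral_comp_mul_deriv (a := 0) (b := Real.pi)
    (f := fun θ => -Real.cos θ) (f' := Real.sin) (g := fun x => (1 - x ^ 2) ^ k)
    (fun θ _ => (Real.hasDerivAt_cos θ).neg |>.congr_deriv (neg_neg _))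
    Real.continuous_sin.continuousOn (by fun_prop)
  simp only [Real.cos_zero, Real.cos_pi, neg_neg, Function.comp_apply, neg_sq, Real.cos_sq',
    sub_sub_cancel, ← pow_mul, ← pow_succ] at this
  exact this.symm

lemma centralBinom_div_four_pow_mul_prod (k : ℕ) :
    (k.centralBinom : ℝ) / 4 ^ k * ∏ i ∈ range k, (2 * (i : ℝ) + 2) / (2 * i + 3) =
      1 / (2 * k + 1) := by
  induction k with
  | zero => simp
  | succ k ih =>
    have h : ((k + 1).centralBinom : ℝ) = 2 * (2 * k + 1) * k.centralBinom / (k + 1) := by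
      rw [eq_div_iff (by positivity)]
      exact_mod_cast (mul_comm _ _).trans (Nat.succ_mul_centralBinom_succ k)
    rw [prod_range_succ, h, pow_succ]
    calc 2 * (2 * (k : ℝ) + 1) * k.centralBinom / (k + 1) / (4 ^ k * 4) *
          ((∏ i ∈ range k, (2 * (i : ℝ) + 2) / (2 * i + 3)) * ((2 * k + 2) / (2 * k + 3)))
        = (k.centralBinom / 4 ^ k * ∏ i ∈ range k, (2 * (i : ℝ) + 2) / (2 * i + 3)) *
          (2 * k + 1) / (2 * k + 3) := by field_simp; ring
      _ = 1 / (2 * ((k + 1 : ℕ) : ℝ) + 1) := by rw [ih]; push_cast; field_simp; ring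

lemma l2Inner_legendre_self (k : ℕ) :
    l2Inner (legendre k) (legendre k) = 2 / (2 * k + 1) := by
  have hD : derivative^[k] (legendre k) = C ((k ! : ℝ) * (k.centralBinom / 2 ^ k)) := by
    have h0 : (derivative^[k] (legendre k)).natDegree ≤ 0 :=
      (natDegree_iterate_derivative _ k).trans (by have := natDegree_legendre_le k; omega)
    rw [eq_C_of_natDegree_le_zero h0, coeff_iterate_derivative, zero_add, coeff_legendre_self,
      Nat.descFactorial_self, nsmul_eq_mul]
  rw [l2Inner_legendre, hD, l2Inner_C_X_sq_sub_one_pow, integral_one_sub_sq_pow]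
  have h4 : (4 : ℝ) ^ k = 2 ^ k * 2 ^ k := by rw [← mul_pow]; norm_num
  have hsign : ((-1 : ℝ) ^ k) ^ 2 = 1 := by rw [← pow_mul, mul_comm, pow_mul]; norm_num
  calc _ = 2 * ((k.centralBinom : ℝ) / 4 ^ k * ∏ i ∈ range k, (2 * (i : ℝ) + 2) / (2 * i + 3)) *
        ((-1) ^ k) ^ 2 := by rw [h4]; field_simp
    _ = 2 / (2 * k + 1) := by rw [centralBinom_div_four_pow_mul_prod, hsign]; ring

lemma l2Inner_legendre_legendre (j k : ℕ) :
    l2Inner (legendre j) (legendre k) = if j = k then 2 / (2 * (k : ℝ) + 1) else 0 := by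
  rcases lt_trichotomy j k with h | rfl | h
  · rw [l2Inner_legendre_of_lt h, if_neg h.ne]
  · rw [l2Inner_legendre_self, if_pos rfl]
  · rw [l2Inner_comm, l2Inner_legendre_of_lt h, if_neg h.ne']

lemma sq_eval_le_sum_mul_l2Inner {p : ℕ} {g : ℝ[X]} (hg : g.natDegree ≤ p) (x : ℝ) :
    g.eval x ^ 2 ≤
      (∑ k ∈ range (p + 1), (2 * k + 1) / 2 * (legendre k).eval x ^ 2) * l2Inner g g := by
  have hcoeff (k : ℕ) : (legendre k).coeff k ≠ 0 := by
    rw [coeff_legendre_self]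
    exact div_ne_zero (by exact_mod_cast k.centralBinom_ne_zero) (by positivity)
  obtain ⟨c, rfl⟩ := exists_eq_sum_smul_of_degree_lt natDegree_legendre_le hcoeff
    ((degree_lt_iff_coeff_zero _ _).mpr fun m hm =>
      coeff_eq_zero_of_natDegree_lt (by exact_mod_cast hg.trans_lt hm))
  have hnorm : l2Inner (∑ k ∈ range (p + 1), c k • legendre k)
      (∑ k ∈ range (p + 1), c k • legendre k) =
        ∑ k ∈ range (p + 1), c k ^ 2 * (2 / (2 * k + 1)) := by
    simp only [map_sum, LinearMap.sum_apply, map_smul, LinearMap.smul_apply, smul_eq_mul,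
      l2Inner_legendre_legendre, mul_ite, mul_zero, sum_ite_eq', mem_range]
    exact sum_congr rfl fun k hk => by rw [if_pos (mem_range.mp hk)]; ring
  rw [hnorm, eval_finsetSum, mul_comm]
  refine sum_sq_le_sum_mul_sum_of_sq_le_mul _ (fun k _ => by positivity)
    (fun k _ => by positivity) fun k _ => le_of_eq ?_
  simp only [eval_smul, smul_eq_mul]
  field_simp

end Polynomial

lemma sq_sub_one_mul_sum_le (v : ℝ) (p : ℕ) :
    (v ^ 2 - 1) * ∑ k ∈ range (p + 1), (2 * k + 1) * v ^ (2 * k) ≤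
      (2 * p + 1) * v ^ (2 * p + 2) := by
  induction p with
  | zero => simp
  | succ p ih =>
    have hv : 0 ≤ v ^ (2 * p + 2) := by
      rw [show 2 * p + 2 = 2 * (p + 1) by ring, pow_mul]; positivity
    rw [sum_range_succ, mul_add, show 2 * (p + 1) = 2 * p + 2 by ring,
      show v ^ (2 * p + 2 + 2) = v ^ (2 * p + 2) * v ^ 2 by ring]
    push_cast
    nlinarith

lemma hasDerivAt_add_sqrt_sq_sub_one {x : ℝ} (hx : 1 < x) :
    HasDerivAt (fun y => y + √(y ^ 2 - 1)) ((x + √(x ^ 2 - 1)) / √(x ^ 2 - 1)) x := by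
  have hr : 0 < √(x ^ 2 - 1) := Real.sqrt_pos.mpr (by nlinarith)
  refine ((hasDerivAt_id' x).add
    (((hasDerivAt_pow 2 x).sub_const 1).sqrt (by nlinarith))).congr_deriv ?_
  field_simp
  ring

-- The right-hand side is the derivative of `(x + √(x ^ 2 - 1)) ^ (2 * p + 1) / 4`.
lemma sum_mul_add_sqrt_pow_le {x : ℝ} (hx : 1 < x) (p : ℕ) :
    ∑ k ∈ range (p + 1), (2 * k + 1) / 2 * (x + √(x ^ 2 - 1)) ^ (2 * k) ≤
      (2 * p + 1) * (x + √(x ^ 2 - 1)) ^ (2 * p) *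
        ((x + √(x ^ 2 - 1)) / √(x ^ 2 - 1)) / 4 := by
  set r := √(x ^ 2 - 1)
  set v := x + r
  have hr : 0 < r := Real.sqrt_pos.mpr (by nlinarith)
  have hv : 0 < v := by linarith
  have key := sq_sub_one_mul_sum_le v p
  rw [show v ^ 2 - 1 = 2 * r * v by
    linear_combination -Real.sq_sqrt (by nlinarith : (0 : ℝ) ≤ x ^ 2 - 1)] at key
  have hS : ∑ k ∈ range (p + 1), (2 * k + 1) / 2 * v ^ (2 * k) =
      (∑ k ∈ range (p + 1), (2 * k + 1) * v ^ (2 * k)) / 2 := by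
    rw [sum_div]; exact sum_congr rfl fun _ _ => by ring
  rw [hS, show (2 * p + 1) * v ^ (2 * p) * (v / r) / 4 =
      (2 * p + 1) * v ^ (2 * p + 2) / (2 * r * v) / 2 by field_simp; ring,
    div_le_div_iff_of_pos_right two_pos, le_div_iff₀ (by positivity)]
  linarith

lemma integral_sum_mul_add_sqrt_pow_le (p : ℕ) {lam : ℝ} (hlam : 1 ≤ lam) :
    ∫ x in (1 : ℝ)..lam, ∑ k ∈ range (p + 1), (2 * k + 1) / 2 * (x + √(x ^ 2 - 1)) ^ (2 * k) ≤
      ((lam + √(lam ^ 2 - 1)) ^ (2 * p + 1) - 1) / 4 := by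
  have h := intervalIntegral.integral_le_sub_of_hasDeriv_right_of_le hlam
    (g := fun x => (x + √(x ^ 2 - 1)) ^ (2 * p + 1) / 4) (by fun_prop)
    (fun x hx => by
      have := ((hasDerivAt_add_sqrt_sq_sub_one hx.1).pow (2 * p + 1)).div_const 4
      push_cast at this
      simpa using this.hasDerivWithinAt)
    (Continuous.integrableOn_Icc (by fun_prop)) fun x hx => sum_mul_add_sqrt_pow_le hx.1 p
  refine h.trans_eq ?_
  norm_num
  ring

lemma integral_sq_eval_le_l2Inner {p : ℕ} {g : ℝ[X]} (hg : g.natDegree ≤ p) {lam : ℝ}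
    (hlam : 1 ≤ lam) :
    ∫ x in (1 : ℝ)..lam, g.eval x ^ 2 ≤
      ((lam + √(lam ^ 2 - 1)) ^ (2 * p + 1) - 1) / 4 * l2Inner g g := by
  set K := fun x : ℝ => ∑ k ∈ range (p + 1), (2 * k + 1) / 2 * (x + √(x ^ 2 - 1)) ^ (2 * k)
  have hpt : ∀ x ∈ Set.Icc 1 lam, g.eval x ^ 2 ≤ K x * l2Inner g g := fun x hx =>
    (sq_eval_le_sum_mul_l2Inner hg x).trans <| mul_le_mul_of_nonneg_right
      (sum_le_sum fun k _ => mul_le_mul_of_nonneg_left (sq_eval_legendre_le hx.1 k)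
        (by positivity))
      (l2Inner_self_nonneg g)
  calc ∫ x in (1 : ℝ)..lam, g.eval x ^ 2
      ≤ ∫ x in (1 : ℝ)..lam, K x * l2Inner g g :=
        intervalIntegral.integral_mono_on hlam (Continuous.intervalIntegrable (by fun_prop) _ _)
          (Continuous.intervalIntegrable (by fun_prop) _ _) hpt
    _ = (∫ x in (1 : ℝ)..lam, K x) * l2Inner g g := intervalIntegral.integral_mul_const _ _
    _ ≤ _ := mul_le_mul_of_nonneg_right (integral_sum_mul_add_sqrt_pow_le p hlam)
        (l2Inner_self_nonneg g)

lemma integral_Ioo_diff_Icc_neg_one_one {f : ℝ → ℝ} (hf : Continuous f) {c : ℝ} (hc : 1 ≤ c) :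
    ∫ x in Set.Ioo (-c) c \ Set.Icc (-1) 1, f x = (∫ x in (-c)..(-1), f x) + ∫ x in 1..c, f x := by
  have hsplit : Set.Ioo (-c) c \ Set.Icc (-1) 1 = Set.Ioo (-c) (-1) ∪ Set.Ioo 1 c := by
    ext x
    simp only [Set.mem_sdiff, Set.mem_Ioo, Set.mem_Icc, Set.mem_union, not_and_or, not_le]
    constructor
    · rintro ⟨⟨h₁, h₂⟩, h | h⟩ <;> [left; right] <;> constructor <;> linarith
    · rintro (⟨h₁, h₂⟩ | ⟨h₁, h₂⟩) <;> refine ⟨⟨by linarith, by linarith⟩, ?_⟩ <;>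
        [left; right] <;> linarith
  have hdisj : Disjoint (Set.Ioo (-c) (-1)) (Set.Ioo 1 c) :=
    Set.disjoint_left.mpr fun x h₁ h₂ => by linarith [h₁.2, h₂.1]
  rw [hsplit, setIntegral_union hdisj measurableSet_Ioo
    (hf.integrableOn_Icc.mono_set Set.Ioo_subset_Icc_self)
    (hf.integrableOn_Icc.mono_set Set.Ioo_subset_Icc_self),
    intervalIntegral.integral_of_le (by linarith), intervalIntegral.integral_of_le hc,
    integral_Ioc_eq_integral_Ioo, integral_Ioc_eq_integral_Ioo]

theorem stmt_0_general (p : ℕ) (lam : ℝ) (hlam : 1 < lam)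
    (g : Polynomial ℝ) (hg : g.natDegree ≤ p) :
    (∫ x in Set.Ioo (-lam) lam \ Set.Icc (-1 : ℝ) 1, (g.eval x) ^ 2) ≤
      (1 / 2) * ((lam + Real.sqrt (lam ^ 2 - 1)) ^ (2 * p + 1) - 1) *
        ∫ x in Set.Ioo (-1 : ℝ) 1, (g.eval x) ^ 2 := by
  have hdeg : (g.comp (-X)).natDegree ≤ p := by
    rw [natDegree_comp]; simpa using hg
  have hright := integral_sq_eval_le_l2Inner hg hlam.le
  have hleft := integral_sq_eval_le_l2Inner hdeg hlam.le
  simp only [l2Inner_comp_neg_X, eval_comp, eval_neg, eval_X] at hleft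
  rw [intervalIntegral.integral_comp_neg (fun x => g.eval x ^ 2)] at hleft
  rw [integral_Ioo_diff_Icc_neg_one_one (by fun_prop) hlam.le, ← integral_Ioc_eq_integral_Ioo,
    ← intervalIntegral.integral_of_le (by norm_num), ← l2Inner_self]
  linarith

/-- One-dimensional inverse domain estimate (Lemma 3.5 / \cite[Lemma 2.3]{Ch20}):
for a polynomial `g` of degree at most `p ≥ 1` and `λ > 1`,
`∫_{I_λ \ Ī} g² ≤ ½[(λ+√(λ²−1))^{2p+1} − 1] ∫_I g²` with `I = (-1,1)`, `I_λ = (-λ,λ)`. -/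
theorem stmt_0 (p : ℕ) (hp : 1 ≤ p) (lam : ℝ) (hlam : 1 < lam)
    (g : Polynomial ℝ) (hg : g.natDegree ≤ p) :
    (∫ x in Set.Ioo (-lam) lam \ Set.Icc (-1 : ℝ) 1, (g.eval x) ^ 2) ≤
      (1 / 2) * ((lam + Real.sqrt (lam ^ 2 - 1)) ^ (2 * p + 1) - 1) *
        ∫ x in Set.Ioo (-1 : ℝ) 1, (g.eval x) ^ 2 :=
  stmt_0_general p lam hlam g hg
end
end

section
/- Let Û and U be open subsets of ℝ³ and let Φ : Û → U be a C² diffeomorphism with Jacobian matrix DΦ and Jacobian determinant J = det(DΦ) ≠ 0 on Û. Let w : U → ℝ³ be a continuously differentiable vector field, and define the Piola-transformed field ŵ : Û → ℝ³ by ŵ(x̂) = J(x̂) · DΦ(x̂)⁻¹ · w(Φ(x̂)). Then for every x̂ ∈ Û, div̂ ŵ (x̂) = J(x̂) · (div w)(Φ(x̂)); equivalently, (∇·w)∘Φ = J⁻¹ ∇̂·( J DΦ⁻¹ (w∘Φ) ). -/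
open MeasureTheory

/-- The Jacobian matrix `DΦ(x)` of a map `Φ : ℝ³ → ℝ³`: `(DΦ)_{ij} = ∂_j Φ_i`. -/
noncomputable def jacobianMatrix (Φ : (Fin 3 → ℝ) → (Fin 3 → ℝ)) (x : Fin 3 → ℝ) :
    Matrix (Fin 3) (Fin 3) ℝ :=
  fun i j => fderiv ℝ Φ x (Pi.single j 1) i

/-- The divergence `div v = ∂₁v₁ + ∂₂v₂ + ∂₃v₃` of a vector field on `ℝ³`. -/
noncomputable def div3 (v : (Fin 3 → ℝ) → (Fin 3 → ℝ)) (x : Fin 3 → ℝ) : ℝ :=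
  ∑ i, fderiv ℝ v x (Pi.single i 1) i

/-!
Write `A = DΦ`. Since `det A • A⁻¹ = adj A`, the Piola field is `ŵ = adj A (w ∘ Φ)`, and the
product rule gives `div̂ ŵ = (Σᵢ ∂ᵢ (adj A)ᵢ) ⬝ (w ∘ Φ) + tr (adj A · D(w ∘ Φ))`. The first term
vanishes (Piola identity): row `i` of `adj A` is the cross product of columns `i + 1` and `i + 2`
of `A`, so differentiating produces six terms `∂ᵢ∂ⱼΦ × ∂ₖΦ` which cancel in pairs by symmetry
of second derivatives and antisymmetry of `×`. By the chain rule the second term is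
`tr (adj A · Dw(Φ) · A) = tr (A · adj A · Dw(Φ)) = det A · div w (Φ)`.
-/

open Matrix

theorem adjugate_fin_three_row {R : Type*} [CommRing R] (A : Matrix (Fin 3) (Fin 3) R)
    (i : Fin 3) : adjugate A i = Aᵀ (i + 1) ⨯₃ Aᵀ (i + 2) := by
  ext j
  fin_cases i <;> fin_cases j <;> simp [adjugate_fin_three, cross_apply] <;> ring

theorem trace_adjugate_mul_mul {n R : Type*} [Fintype n] [DecidableEq n] [CommRing R]
    (A B : Matrix n n R) : (adjugate A * B * A).trace = A.det * B.trace := by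
  rw [trace_mul_comm, ← Matrix.mul_assoc, mul_adjugate, smul_mul, Matrix.one_mul, trace_smul,
    smul_eq_mul]

section Bilinear

variable {𝕜 E V W Z : Type*} [NontriviallyNormedField 𝕜] [CompleteSpace 𝕜]
  [NormedAddCommGroup E] [NormedSpace 𝕜 E]
  [NormedAddCommGroup V] [NormedSpace 𝕜 V] [FiniteDimensional 𝕜 V]
  [NormedAddCommGroup W] [NormedSpace 𝕜 W] [FiniteDimensional 𝕜 W]
  [NormedAddCommGroup Z] [NormedSpace 𝕜 Z]
  (B : V →ₗ[𝕜] W →ₗ[𝕜] Z) {f : E → V} {g : E → W} {x : E}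

theorem LinearMap.hasFDerivAt_of_bilinear (hf : DifferentiableAt 𝕜 f x)
    (hg : DifferentiableAt 𝕜 g x) :
    HasFDerivAt (fun y => B (f y) (g y))
      (B.toContinuousBilinearMap.precompR E (f x) (fderiv 𝕜 g x) +
        B.toContinuousBilinearMap.precompL E (fderiv 𝕜 f x) (g x)) x :=
  B.toContinuousBilinearMap.hasFDerivAt_of_bilinear hf.hasFDerivAt hg.hasFDerivAt

theorem LinearMap.fderiv_of_bilinear_apply (hf : DifferentiableAt 𝕜 f x)
    (hg : DifferentiableAt 𝕜 g x) (e : E) :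
    fderiv 𝕜 (fun y => B (f y) (g y)) x e =
      B (fderiv 𝕜 f x e) (g x) + B (f x) (fderiv 𝕜 g x e) := by
  rw [(B.hasFDerivAt_of_bilinear hf hg).fderiv]
  simp [add_comm]

end Bilinear

theorem fderiv_apply_apply {𝕜 E F ι : Type*} [NontriviallyNormedField 𝕜] [Fintype ι]
    [NormedAddCommGroup E] [NormedSpace 𝕜 E] [NormedAddCommGroup F] [NormedSpace 𝕜 F]
    {f : E → ι → F} {x : E} (hf : DifferentiableAt 𝕜 f x) (e : E) (i : ι) :
    fderiv 𝕜 (fun y => f y i) x e = fderiv 𝕜 f x e i := by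
  rw [fderiv_apply hf]
  rfl

theorem jacobianMatrix_eq_toMatrix' (Φ : (Fin 3 → ℝ) → Fin 3 → ℝ) (x : Fin 3 → ℝ) :
    jacobianMatrix Φ x = LinearMap.toMatrix' (fderiv ℝ Φ x : (Fin 3 → ℝ) →ₗ[ℝ] Fin 3 → ℝ) := rfl

theorem jacobianMatrix_comp {w Φ : (Fin 3 → ℝ) → Fin 3 → ℝ} {x : Fin 3 → ℝ}
    (hw : DifferentiableAt ℝ w (Φ x)) (hΦ : DifferentiableAt ℝ Φ x) :
    jacobianMatrix (w ∘ Φ) x = jacobianMatrix w (Φ x) * jacobianMatrix Φ x := by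
  rw [jacobianMatrix_eq_toMatrix', fderiv_comp x hw hΦ]
  exact LinearMap.toMatrix'_comp _ _

theorem div3_eq_trace (v : (Fin 3 → ℝ) → Fin 3 → ℝ) (x : Fin 3 → ℝ) :
    div3 v x = (jacobianMatrix v x).trace := rfl

theorem div3_mulVec {M : (Fin 3 → ℝ) → Matrix (Fin 3) (Fin 3) ℝ} {v : (Fin 3 → ℝ) → Fin 3 → ℝ}
    {x : Fin 3 → ℝ} (hM : ∀ i, DifferentiableAt ℝ (fun y => M y i) x)
    (hv : DifferentiableAt ℝ v x) :
    div3 (fun y => M y *ᵥ v y) x =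
      (∑ i, fderiv ℝ (fun y => M y i) x (Pi.single i 1)) ⬝ᵥ v x +
        (M x * jacobianMatrix v x).trace := by
  have hMv : DifferentiableAt ℝ (fun y => M y *ᵥ v y) x := differentiableAt_pi.2 fun i =>
    ((dotProductBilin ℝ ℝ).hasFDerivAt_of_bilinear (hM i) hv).differentiableAt
  rw [div3, sum_dotProduct, trace, ← Finset.sum_add_distrib]
  refine Finset.sum_congr rfl fun i _ => ?_
  rw [diag_apply, mul_apply', ← fderiv_apply_apply hMv]
  exact (dotProductBilin ℝ ℝ).fderiv_of_bilinear_apply (hM i) hv _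

section Piola

variable {Φ : (Fin 3 → ℝ) → Fin 3 → ℝ} {x : Fin 3 → ℝ}

theorem hasFDerivAt_jacobianMatrix_col (hDΦ : DifferentiableAt ℝ (fderiv ℝ Φ) x) (m : Fin 3) :
    HasFDerivAt (fun y => (jacobianMatrix Φ y)ᵀ m)
      ((ContinuousLinearMap.apply ℝ _ (Pi.single m 1)).comp (fderiv ℝ (fderiv ℝ Φ) x)) x :=
  (ContinuousLinearMap.apply ℝ (Fin 3 → ℝ) (Pi.single m 1)).hasFDerivAt.comp x hDΦ.hasFDerivAt
    (f := fderiv ℝ Φ)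

theorem fderiv_adjugate_jacobianMatrix_row (hDΦ : DifferentiableAt ℝ (fderiv ℝ Φ) x) (i : Fin 3)
    (e : Fin 3 → ℝ) :
    fderiv ℝ (fun y => adjugate (jacobianMatrix Φ y) i) x e =
      fderiv ℝ (fderiv ℝ Φ) x e (Pi.single (i + 1) 1) ⨯₃ (jacobianMatrix Φ x)ᵀ (i + 2) +
        (jacobianMatrix Φ x)ᵀ (i + 1) ⨯₃ fderiv ℝ (fderiv ℝ Φ) x e (Pi.single (i + 2) 1) := by
  simp_rw [adjugate_fin_three_row]
  rw [crossProduct.fderiv_of_bilinear_apply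
      (hasFDerivAt_jacobianMatrix_col hDΦ _).differentiableAt
      (hasFDerivAt_jacobianMatrix_col hDΦ _).differentiableAt,
    (hasFDerivAt_jacobianMatrix_col hDΦ _).fderiv, (hasFDerivAt_jacobianMatrix_col hDΦ _).fderiv]
  rfl

theorem differentiableAt_adjugate_jacobianMatrix_row (hDΦ : DifferentiableAt ℝ (fderiv ℝ Φ) x)
    (i : Fin 3) : DifferentiableAt ℝ (fun y => adjugate (jacobianMatrix Φ y) i) x := by
  simp_rw [adjugate_fin_three_row]
  exact (crossProduct.hasFDerivAt_of_bilinear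
    (hasFDerivAt_jacobianMatrix_col hDΦ _).differentiableAt
    (hasFDerivAt_jacobianMatrix_col hDΦ _).differentiableAt).differentiableAt

theorem sum_fderiv_adjugate_jacobianMatrix_row (hΦ : ContDiffAt ℝ 2 Φ x) :
    ∑ i, fderiv ℝ (fun y => adjugate (jacobianMatrix Φ y) i) x (Pi.single i 1) = 0 := by
  have hDΦ : DifferentiableAt ℝ (fderiv ℝ Φ) x :=
    (hΦ.fderiv_right (m := 1) le_rfl).differentiableAt one_ne_zero
  have hsymm := hΦ.isSymmSndFDerivAt (by simp)
  simp only [fderiv_adjugate_jacobianMatrix_row hDΦ, Fin.sum_univ_three, Fin.isValue,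
    Fin.reduceAdd]
  rw [hsymm (Pi.single 1 1) (Pi.single 0 1), hsymm (Pi.single 2 1) (Pi.single 0 1),
    hsymm (Pi.single 2 1) (Pi.single 1 1)]
  simp only [← cross_anticomm _ ((jacobianMatrix Φ x)ᵀ _)]
  abel

end Piola

theorem Filter.EventuallyEq.div3_eq {v v' : (Fin 3 → ℝ) → Fin 3 → ℝ} {x : Fin 3 → ℝ}
    (h : v =ᶠ[nhds x] v') : div3 v x = div3 v' x := by
  rw [div3, div3, h.fderiv_eq]

theorem stmt_4_general (Uhat U : Set (Fin 3 → ℝ)) (hUhat : IsOpen Uhat) (hU : IsOpen U)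
    (Φ : (Fin 3 → ℝ) → (Fin 3 → ℝ))
    (hΦ : ContDiffOn ℝ 2 Φ Uhat)
    (hbij : Set.BijOn Φ Uhat U)
    (hJ : ∀ x ∈ Uhat, (jacobianMatrix Φ x).det ≠ 0)
    (w : (Fin 3 → ℝ) → (Fin 3 → ℝ)) (hw : ContDiffOn ℝ 1 w U)
    (what : (Fin 3 → ℝ) → (Fin 3 → ℝ))
    (hwhat : ∀ x ∈ Uhat,
      what x = (jacobianMatrix Φ x).det • (jacobianMatrix Φ x)⁻¹.mulVec (w (Φ x)))
    (xhat : Fin 3 → ℝ) (hxhat : xhat ∈ Uhat) :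
    div3 what xhat = (jacobianMatrix Φ xhat).det * div3 w (Φ xhat) := by
  have hΦx : ContDiffAt ℝ 2 Φ xhat := hΦ.contDiffAt (hUhat.mem_nhds hxhat)
  have hDΦ : DifferentiableAt ℝ (fderiv ℝ Φ) xhat :=
    (hΦx.fderiv_right (m := 1) le_rfl).differentiableAt one_ne_zero
  have hwx : DifferentiableAt ℝ w (Φ xhat) :=
    (hw.contDiffAt (hU.mem_nhds (hbij.mapsTo hxhat))).differentiableAt one_ne_zero
  have hadj : what =ᶠ[nhds xhat] fun y => adjugate (jacobianMatrix Φ y) *ᵥ (w ∘ Φ) y := by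
    filter_upwards [hUhat.mem_nhds hxhat] with y hy
    rw [hwhat y hy, det_smul_inv_mulVec_eq_cramer _ _ (hJ y hy).isUnit, cramer_eq_adjugate_mulVec,
      Function.comp_apply]
  rw [hadj.div3_eq, div3_mulVec (differentiableAt_adjugate_jacobianMatrix_row hDΦ)
      (hwx.comp xhat (hΦx.differentiableAt two_ne_zero)),
    sum_fderiv_adjugate_jacobianMatrix_row hΦx, zero_dotProduct, zero_add,
    jacobianMatrix_comp hwx (hΦx.differentiableAt two_ne_zero), ← Matrix.mul_assoc,
    trace_adjugate_mul_mul, div3_eq_trace]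

/-- Divergence identity for the Piola transform: if `Φ : Û → U` is a `C²` diffeomorphism with
Jacobian `DΦ` and `J = det DΦ ≠ 0`, `w` is a `C¹` vector field on `U`, and
`ŵ(x̂) = J(x̂) DΦ(x̂)⁻¹ w(Φ(x̂))`, then `div̂ ŵ(x̂) = J(x̂) (div w)(Φ(x̂))` on `Û`. -/
theorem stmt_4 (Uhat U : Set (Fin 3 → ℝ)) (hUhat : IsOpen Uhat) (hU : IsOpen U)
    (Φ Ψ : (Fin 3 → ℝ) → (Fin 3 → ℝ))
    (hΦ : ContDiffOn ℝ 2 Φ Uhat) (hΨ : ContDiffOn ℝ 2 Ψ U)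
    (hbij : Set.BijOn Φ Uhat U) (hinv : Set.InvOn Ψ Φ Uhat U)
    (hJ : ∀ x ∈ Uhat, (jacobianMatrix Φ x).det ≠ 0)
    (w : (Fin 3 → ℝ) → (Fin 3 → ℝ)) (hw : ContDiffOn ℝ 1 w U)
    (what : (Fin 3 → ℝ) → (Fin 3 → ℝ))
    (hwhat : ∀ x ∈ Uhat,
      what x = (jacobianMatrix Φ x).det • (jacobianMatrix Φ x)⁻¹.mulVec (w (Φ x)))
    (xhat : Fin 3 → ℝ) (hxhat : xhat ∈ Uhat) :
    div3 what xhat = (jacobianMatrix Φ xhat).det * div3 w (Φ xhat) :=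
  stmt_4_general Uhat U hUhat hU Φ hΦ hbij hJ w hw what hwhat xhat hxhat
end

section
/- In the setting of the previous configuration, assume additionally δ₀ ∈ (0,1/2) and δ₀h₁ ≤ a_j ≤ (1−δ₀)h₁ for j = 1,2,3, δ₀h₃ ≤ c₄ ≤ (1−δ₀)h₃, and δ₀h₂ ≤ b₅ ≤ (1−δ₀)h₂. Then vol(T₁₁) ≥ (1/6)δ₀² h₁h₂h₃, vol(T₁₂) ≥ (1/6)δ₀² h₁h₂h₃, vol(T₁₃) ≥ (1/6)(δ₀+δ₀²)δ₀ h₁h₂h₃, vol(T₁₄) ≥ (1/6)δ₀ h₁h₂h₃, and vol(T₁₅) ≥ (1/6)δ₀² h₁h₂h₃. In particular each of the five tetrahedra has volume at least (1/6)δ₀²·vol(K). -/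
/-!
A simplex with vertices `v₀, …, vₙ` in `ℝⁿ` has volume at least `|det (vᵢ - v₀)| / n!`.
Sorting coordinates covers the unit cube by `n!` coordinate permutations of the ordered simplex
`0 ≤ x₀ ≤ ⋯ ≤ xₙ₋₁ ≤ 1`, so the latter has volume at least `1 / n!`; the consecutive differences
of a point of the ordered simplex are barycentric weights, so the ordered simplex is mapped into
the simplex by a linear map with the same determinant as the edge matrix `(vᵢ - v₀)ᵢ`.

For the five tetrahedra of the decomposition these determinants are, up to sign, products of
coordinates of the cut points (for `T₁₃` the sum `a₁ (h₃ (h₂ - b₅) + b₅ c₄)`), and each factor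
is bounded below by the `δ₀`-constraints.
-/

open MeasureTheory Set Matrix
open scoped ENNReal Nat

def orderedSimplex (n : ℕ) : Set (Fin n → ℝ) := {x | Monotone x ∧ 0 ≤ x ∧ x ≤ 1}

theorem Icc_subset_iUnion_preimage_comp_perm (n : ℕ) :
    Icc (0 : Fin n → ℝ) 1 ⊆ ⋃ σ : Equiv.Perm (Fin n), (· ∘ σ) ⁻¹' orderedSimplex n := by
  rintro x ⟨hx0, hx1⟩
  exact mem_iUnion.2 ⟨Tuple.sort x, Tuple.monotone_sort x,
    fun i => hx0 (Tuple.sort x i), fun i => hx1 (Tuple.sort x i)⟩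

theorem volume_preimage_comp_perm {n : ℕ} (σ : Equiv.Perm (Fin n)) (s : Set (Fin n → ℝ)) :
    volume ((· ∘ σ) ⁻¹' s) = volume s := by
  have hσ : ⇑(MeasurableEquiv.piCongrLeft (fun _ : Fin n => ℝ) σ.symm) = (· ∘ σ) := by
    ext x i
    simp [MeasurableEquiv.coe_piCongrLeft, Equiv.piCongrLeft_apply]
  rw [← hσ]
  exact (volume_measurePreserving_piCongrLeft _ σ.symm).measure_preimage_equiv s

theorem inv_factorial_le_volume_orderedSimplex (n : ℕ) :
    (n ! : ℝ≥0∞)⁻¹ ≤ volume (orderedSimplex n) := by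
  rw [ENNReal.inv_le_iff_le_mul (fun _ => by simp [Nat.factorial_ne_zero]) (by simp)]
  calc (1 : ℝ≥0∞) = volume (Icc (0 : Fin n → ℝ) 1) := by simp [Real.volume_Icc_pi]
    _ ≤ ∑ σ : Equiv.Perm (Fin n), volume ((· ∘ σ) ⁻¹' orderedSimplex n) :=
      (measure_mono (Icc_subset_iUnion_preimage_comp_perm n)).trans (measure_iUnion_fintype_le _ _)
    _ = n ! * volume (orderedSimplex n) := by
      simp [volume_preimage_comp_perm, Fintype.card_perm]

theorem vecCons_zero_single {α : Type*} [Zero α] {n : ℕ} (j : Fin n) (a : α) :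
    vecCons 0 (Pi.single j a) = Pi.single j.succ a := by
  ext k
  cases k using Fin.cases <;> simp [Pi.single_apply]

-- `x ↦ (x₀, x₁ - x₀, …, xₙ₋₁ - xₙ₋₂)`
def finDiff (n : ℕ) : (Fin n → ℝ) →ₗ[ℝ] Fin n → ℝ where
  toFun x i := vecCons 0 x i.succ - vecCons 0 x i.castSucc
  map_add' x y := by
    have : vecCons (0 : ℝ) (x + y) = vecCons 0 x + vecCons 0 y := by simp
    ext i
    simp only [this, Pi.add_apply]
    ring
  map_smul' c x := by
    have : vecCons (0 : ℝ) (c • x) = c • vecCons 0 x := by simp [smul_cons]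
    ext i
    simp only [this, Pi.smul_apply, smul_eq_mul, RingHom.id_apply]
    ring

theorem toMatrix'_finDiff_apply {n : ℕ} (i j : Fin n) :
    LinearMap.toMatrix' (finDiff n) i j =
      (Pi.single j 1 : Fin n → ℝ) i - (Pi.single j.succ 1 : Fin (n + 1) → ℝ) i.castSucc := by
  simp [LinearMap.toMatrix'_apply, finDiff, vecCons_zero_single]

theorem det_finDiff (n : ℕ) : LinearMap.det (finDiff n) = 1 := by
  have hcast {i j : Fin n} (hij : i ≤ j) : (Pi.single j.succ 1 : Fin (n + 1) → ℝ) i.castSucc = 0 :=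
    Pi.single_eq_of_ne (by simp [Fin.ext_iff]; omega) _
  rw [← LinearMap.det_toMatrix', det_of_isLowerTriangular]
  · simp only [toMatrix'_finDiff_apply]
    simp [hcast]
  · intro i j hji
    have hij : i < j := OrderDual.toDual_lt_toDual.1 hji
    rw [toMatrix'_finDiff_apply, hcast hij.le, Pi.single_eq_of_ne hij.ne, sub_zero]

theorem finDiff_nonneg {n : ℕ} {x : Fin n → ℝ} (hx : x ∈ orderedSimplex n) :
    0 ≤ finDiff n x := by
  intro i
  cases n with
  | zero => exact i.elim0
  | succ m =>
    have hmono : Monotone (vecCons 0 x) := monotone_vecCons.2 ⟨hx.2.1 0, hx.1⟩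
    exact sub_nonneg.2 (hmono i.castSucc_lt_succ.le)

theorem sum_finDiff_le_one {n : ℕ} {x : Fin n → ℝ} (hx : x ∈ orderedSimplex n) :
    ∑ i, finDiff n x i ≤ 1 := by
  cases n with
  | zero => simp
  | succ m =>
    rw [← Finset.Iic_top, show (⊤ : Fin (m + 1)) = Fin.last m from rfl]
    simp only [finDiff, LinearMap.coe_mk, AddHom.coe_mk]
    rw [Fin.sum_Iic_sub]
    simpa [← Fin.succ_last] using hx.2.2 (Fin.last m)

theorem add_sum_smul_sub_mem_convexHull {𝕜 E ι : Type*} [Field 𝕜] [LinearOrder 𝕜]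
    [IsStrictOrderedRing 𝕜] [AddCommGroup E] [Module 𝕜 E] [Fintype ι] (v₀ : E) (v : ι → E)
    {y : ι → 𝕜} (hy : 0 ≤ y) (hsum : ∑ i, y i ≤ 1) :
    v₀ + ∑ i, y i • (v i - v₀) ∈ convexHull 𝕜 (insert v₀ (range v)) := by
  have := (convex_convexHull 𝕜 (insert v₀ (range v))).sum_mem (t := Finset.univ)
    (w := fun o : Option ι => o.elim (1 - ∑ i, y i) y) (z := fun o => o.elim v₀ v)
    (by rintro (_ | i) _; exacts [by simpa using hsum, hy i]) (by simp [Fintype.sum_option])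
    (by rintro (_ | i) _ <;> apply subset_convexHull <;> simp)
  convert this using 1
  simp [Fintype.sum_option, smul_sub, Finset.sum_sub_distrib, sub_smul, ← Finset.sum_smul]
  abel

theorem ofReal_abs_det_div_factorial_le_volume_convexHull {n : ℕ} (v₀ : Fin n → ℝ)
    (v : Fin n → Fin n → ℝ) :
    ENNReal.ofReal (|(Matrix.of fun i => v i - v₀).det| / n !) ≤
      volume (convexHull ℝ (insert v₀ (range v))) := by
  set W := Matrix.of fun i => v i - v₀
  let L := toLin' Wᵀ ∘ₗ finDiff n
  have hL : (v₀ + ·) '' (L '' orderedSimplex n) ⊆ convexHull ℝ (insert v₀ (range v)) := by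
    rintro _ ⟨_, ⟨x, hx, rfl⟩, rfl⟩
    have hLx : L x = ∑ i, finDiff n x i • (v i - v₀) := by
      simp [L, toLin'_apply, mulVec_transpose, vecMul_eq_sum, W]
      rfl
    rw [hLx]
    exact add_sum_smul_sub_mem_convexHull v₀ v (finDiff_nonneg hx) (sum_finDiff_le_one hx)
  have hdet : |LinearMap.det L| = |W.det| := by
    simp [L, LinearMap.det_comp, det_finDiff, LinearMap.det_toLin', det_transpose]
  calc ENNReal.ofReal (|W.det| / n !) = ENNReal.ofReal |W.det| * (n ! : ℝ≥0∞)⁻¹ := by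
        rw [ENNReal.ofReal_div_of_pos (by positivity), div_eq_mul_inv, ENNReal.ofReal_natCast]
    _ ≤ ENNReal.ofReal |W.det| * volume (orderedSimplex n) := by
        gcongr; exact inv_factorial_le_volume_orderedSimplex n
    _ = volume ((v₀ + ·) '' (L '' orderedSimplex n)) := by
        rw [Set.image_add_left, measure_preimage_add, Measure.addHaar_image_linearMap, hdet]
    _ ≤ _ := measure_mono hL

theorem ofReal_le_volume_convexHull_of_le_abs_det {v₀ v₁ v₂ v₃ : Fin 3 → ℝ} {r : ℝ}
    (h : 6 * r ≤ |(Matrix.of ![v₁ - v₀, v₂ - v₀, v₃ - v₀]).det|) :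
    ENNReal.ofReal r ≤ volume (convexHull ℝ {v₀, v₁, v₂, v₃}) := by
  have hW : (Matrix.of fun i => ![v₁, v₂, v₃] i - v₀) =
      Matrix.of ![v₁ - v₀, v₂ - v₀, v₃ - v₀] := by
    ext i : 1
    fin_cases i <;> rfl
  have hrange : insert v₀ (range ![v₁, v₂, v₃]) = {v₀, v₁, v₂, v₃} := by
    rw [range_cons, range_cons_cons_empty, singleton_union]
  have := ofReal_abs_det_div_factorial_le_volume_convexHull v₀ ![v₁, v₂, v₃]
  rw [hW, hrange] at this
  refine le_trans (ENNReal.ofReal_le_ofReal ?_) this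
  rw [show ((3 ! : ℕ) : ℝ) = 6 by norm_num [Nat.factorial]]
  linarith

theorem le_volume_T₁₁ {h₁ h₂ h₃ a₁ b₅ δ₀ : ℝ} (hh₁ : 0 < h₁) (hh₂ : 0 < h₂) (hh₃ : 0 < h₃)
    (hδ₀ : 0 < δ₀) (ha₁ : δ₀ * h₁ ≤ a₁) (hb₅ : δ₀ * h₂ ≤ b₅) :
    ENNReal.ofReal (1 / 6 * (δ₀ ^ 2 * (h₁ * h₂ * h₃))) ≤
      volume (convexHull ℝ {![0, 0, h₃], ![0, 0, 0], ![a₁, 0, 0], ![0, b₅, 0]}) := by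
  have ha₁pos : 0 < a₁ := by nlinarith [mul_pos hδ₀ hh₁]
  have hb₅pos : 0 < b₅ := by nlinarith [mul_pos hδ₀ hh₂]
  refine ofReal_le_volume_convexHull_of_le_abs_det ?_
  simp [det_fin_three, abs_of_pos, hh₃, ha₁pos, hb₅pos]
  nlinarith [mul_le_mul ha₁ hb₅ (by positivity) ha₁pos.le]

theorem le_volume_T₁₂ {h₁ h₂ h₃ a₃ c₄ δ₀ : ℝ} (hh₁ : 0 < h₁) (hh₂ : 0 < h₂) (hh₃ : 0 < h₃)
    (hδ₀ : 0 < δ₀) (ha₃ : δ₀ * h₁ ≤ a₃) (hc₄ : c₄ ≤ (1 - δ₀) * h₃) :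
    ENNReal.ofReal (1 / 6 * (δ₀ ^ 2 * (h₁ * h₂ * h₃))) ≤
      volume (convexHull ℝ {![0, 0, h₃], ![0, h₂, c₄], ![a₃, h₂, h₃], ![0, h₂, h₃]}) := by
  have ha₃pos : 0 < a₃ := by nlinarith [mul_pos hδ₀ hh₁]
  have hc₄lt : 0 < h₃ - c₄ := by nlinarith [mul_pos hδ₀ hh₃]
  refine ofReal_le_volume_convexHull_of_le_abs_det ?_
  simp [det_fin_three, abs_sub_comm c₄, abs_of_pos, hc₄lt, ha₃pos, hh₂]
  nlinarith [mul_le_mul ha₃ (by linarith : δ₀ * h₃ ≤ h₃ - c₄) (by positivity) ha₃pos.le]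

theorem le_volume_T₁₃ {h₁ h₂ h₃ a₁ c₄ b₅ δ₀ : ℝ} (hh₁ : 0 < h₁) (hh₂ : 0 < h₂) (hh₃ : 0 < h₃)
    (hδ₀ : 0 < δ₀) (ha₁ : δ₀ * h₁ ≤ a₁) (hc₄ : δ₀ * h₃ ≤ c₄)
    (hb₅ : δ₀ * h₂ ≤ b₅) (hb₅' : b₅ ≤ (1 - δ₀) * h₂) :
    ENNReal.ofReal (1 / 6 * ((δ₀ + δ₀ ^ 2) * δ₀ * (h₁ * h₂ * h₃))) ≤
      volume (convexHull ℝ {![0, 0, h₃], ![0, h₂, c₄], ![a₁, 0, 0], ![0, b₅, 0]}) := by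
  have ha₁pos : 0 < a₁ := by nlinarith [mul_pos hδ₀ hh₁]
  have hb₅pos : 0 < b₅ := by nlinarith [mul_pos hδ₀ hh₂]
  have hfactor : δ₀ * h₂ * h₃ + δ₀ * h₂ * (δ₀ * h₃) ≤ (h₂ - b₅) * h₃ + b₅ * c₄ := by
    nlinarith [mul_le_mul hb₅ hc₄ (by positivity) hb₅pos.le]
  refine ofReal_le_volume_convexHull_of_le_abs_det ?_
  simp [det_fin_three]
  refine le_trans ?_ (le_abs_self _)
  nlinarith [mul_le_mul ha₁ hfactor (by positivity) ha₁pos.le]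

theorem le_volume_T₁₄ {h₁ h₂ h₃ a₁ a₂ c₄ δ₀ : ℝ} (hh₂ : 0 < h₂) (hh₃ : 0 < h₃)
    (ha₂ : δ₀ * h₁ ≤ a₂) :
    ENNReal.ofReal (1 / 6 * (δ₀ * (h₁ * h₂ * h₃))) ≤
      volume (convexHull ℝ {![0, 0, h₃], ![a₁, 0, 0], ![a₂, 0, h₃], ![0, h₂, c₄]}) := by
  refine ofReal_le_volume_convexHull_of_le_abs_det ?_
  simp [det_fin_three, abs_of_pos, hh₂, hh₃]
  nlinarith [mul_le_mul_of_nonneg_right (ha₂.trans (le_abs_self a₂)) (by positivity : 0 ≤ h₂ * h₃)]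

theorem le_volume_T₁₅ {h₁ h₂ h₃ a₂ a₃ c₄ δ₀ : ℝ} (hh₁ : 0 < h₁) (hh₂ : 0 < h₂) (hh₃ : 0 < h₃)
    (hδ₀ : 0 < δ₀) (ha₂ : δ₀ * h₁ ≤ a₂) (hc₄ : c₄ ≤ (1 - δ₀) * h₃) :
    ENNReal.ofReal (1 / 6 * (δ₀ ^ 2 * (h₁ * h₂ * h₃))) ≤
      volume (convexHull ℝ {![0, 0, h₃], ![0, h₂, c₄], ![a₂, 0, h₃], ![a₃, h₂, h₃]}) := by
  have ha₂pos : 0 < a₂ := by nlinarith [mul_pos hδ₀ hh₁]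
  have hc₄lt : 0 < h₃ - c₄ := by nlinarith [mul_pos hδ₀ hh₃]
  refine ofReal_le_volume_convexHull_of_le_abs_det ?_
  simp [det_fin_three, abs_sub_comm c₄, abs_of_pos, hc₄lt, ha₂pos, hh₂]
  nlinarith [mul_le_mul ha₂ (by linarith : δ₀ * h₃ ≤ h₃ - c₄) (by positivity) ha₂pos.le]

/-- Lower volume bounds for the five tetrahedra in the decomposition of a large interface
element with parameter `δ₀` (proof of Lemma 3.3): each tetrahedron has volume at least
`⅙δ₀²·vol(K)`, with the sharper bounds
`vol(T₁₁) ≥ ⅙δ₀²h₁h₂h₃`, `vol(T₁₂) ≥ ⅙δ₀²h₁h₂h₃`, `vol(T₁₃) ≥ ⅙(δ₀+δ₀²)δ₀h₁h₂h₃`,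
`vol(T₁₄) ≥ ⅙δ₀h₁h₂h₃`, `vol(T₁₅) ≥ ⅙δ₀²h₁h₂h₃`. -/
theorem stmt_7 (h₁ h₂ h₃ a₁ a₂ a₃ c₄ b₅ δ₀ : ℝ)
    (hh₁ : 0 < h₁) (hh₂ : 0 < h₂) (hh₃ : 0 < h₃)
    (hδ₀ : δ₀ ∈ Set.Ioo (0 : ℝ) (1 / 2))
    (ha₁ : δ₀ * h₁ ≤ a₁ ∧ a₁ ≤ (1 - δ₀) * h₁)
    (ha₂ : δ₀ * h₁ ≤ a₂ ∧ a₂ ≤ (1 - δ₀) * h₁)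
    (ha₃ : δ₀ * h₁ ≤ a₃ ∧ a₃ ≤ (1 - δ₀) * h₁)
    (hc₄ : δ₀ * h₃ ≤ c₄ ∧ c₄ ≤ (1 - δ₀) * h₃)
    (hb₅ : δ₀ * h₂ ≤ b₅ ∧ b₅ ≤ (1 - δ₀) * h₂)
    (A B C Z₁ Z₂ Z₃ Z₄ Z₅ : Fin 3 → ℝ)
    (hA : A = ![0, 0, 0]) (hB : B = ![0, 0, h₃]) (hC : C = ![0, h₂, h₃])
    (hZ₁ : Z₁ = ![a₁, 0, 0]) (hZ₂ : Z₂ = ![a₂, 0, h₃]) (hZ₃ : Z₃ = ![a₃, h₂, h₃])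
    (hZ₄ : Z₄ = ![0, h₂, c₄]) (hZ₅ : Z₅ = ![0, b₅, 0])
    (T₁₁ T₁₂ T₁₃ T₁₄ T₁₅ : Set (Fin 3 → ℝ))
    (hT₁₁ : T₁₁ = convexHull ℝ {B, A, Z₁, Z₅}) (hT₁₂ : T₁₂ = convexHull ℝ {B, Z₄, Z₃, C})
    (hT₁₃ : T₁₃ = convexHull ℝ {B, Z₄, Z₁, Z₅}) (hT₁₄ : T₁₄ = convexHull ℝ {B, Z₁, Z₂, Z₄})
    (hT₁₅ : T₁₅ = convexHull ℝ {B, Z₄, Z₂, Z₃}) :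
    (ENNReal.ofReal (1 / 6 * (δ₀ ^ 2 * (h₁ * h₂ * h₃))) ≤ volume T₁₁ ∧
     ENNReal.ofReal (1 / 6 * (δ₀ ^ 2 * (h₁ * h₂ * h₃))) ≤ volume T₁₂ ∧
     ENNReal.ofReal (1 / 6 * ((δ₀ + δ₀ ^ 2) * δ₀ * (h₁ * h₂ * h₃))) ≤ volume T₁₃ ∧
     ENNReal.ofReal (1 / 6 * (δ₀ * (h₁ * h₂ * h₃))) ≤ volume T₁₄ ∧
     ENNReal.ofReal (1 / 6 * (δ₀ ^ 2 * (h₁ * h₂ * h₃))) ≤ volume T₁₅) ∧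
    ∀ T ∈ ({T₁₁, T₁₂, T₁₃, T₁₄, T₁₅} : Set (Set (Fin 3 → ℝ))),
      ENNReal.ofReal (1 / 6 * (δ₀ ^ 2 * (h₁ * h₂ * h₃))) ≤ volume T := by
  obtain ⟨hδ, hδ_half⟩ := hδ₀
  subst hA hB hC hZ₁ hZ₂ hZ₃ hZ₄ hZ₅ hT₁₁ hT₁₂ hT₁₃ hT₁₄ hT₁₅
  have H₁₁ := le_volume_T₁₁ hh₁ hh₂ hh₃ hδ ha₁.1 hb₅.1
  have H₁₂ := le_volume_T₁₂ hh₁ hh₂ hh₃ hδ ha₃.1 hc₄.2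
  have H₁₃ := le_volume_T₁₃ hh₁ hh₂ hh₃ hδ ha₁.1 hc₄.1 hb₅.1 hb₅.2
  have H₁₄ := le_volume_T₁₄ (a₁ := a₁) (c₄ := c₄) hh₂ hh₃ ha₂.1
  have H₁₅ := le_volume_T₁₅ (a₃ := a₃) hh₁ hh₂ hh₃ hδ ha₂.1 hc₄.2
  refine ⟨⟨H₁₁, H₁₂, H₁₃, H₁₄, H₁₅⟩, ?_⟩
  have hδ_sq_le : δ₀ ^ 2 ≤ δ₀ := by nlinarith
  rintro T (rfl | rfl | rfl | rfl | rfl)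
  · exact H₁₁
  · exact H₁₂
  · exact le_trans (ENNReal.ofReal_le_ofReal (by gcongr; nlinarith)) H₁₃
  · exact le_trans (ENNReal.ofReal_le_ofReal (by gcongr)) H₁₄
  · exact H₁₅
end
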